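/- arXiv:2412.08616 — 2 statements merged into one kernel-verified Lean document; each statement's English description precedes it below -/
import Mathlib

section
/- Let d ≥ 2 be an integer and 1 < p < d. Let χ, η : ℝ^d → [0,1] be smooth with χ(x)^p + η(x)^p = 1 for all x, χ = 1 on B_1 and χ = 0 outside B_2. Let (u_n) ⊂ Ẇ^{1,p}(ℝ^d) satisfy sup_n ∫|∇u_n|^p < ∞, and let x_n ∈ ℝ^d and R_n > 0 be such that ∫_{{R_n < |x-x_n| < 2R_n}} |u_n|^{p*} → 0 as n → ∞. Set χ_n(x) = χ((x-x_n)/R_n) and η_n(x) = η((x-x_n)/R_n). Then ∫_{ℝ^d} |∇u_n|^p - ∫_{ℝ^d} |∇(χ_n u_n)|^p - ∫_{ℝ^d} |∇(η_n u_n)|^p → 0 as n → ∞. -/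
open MeasureTheory Filter Metric

noncomputable section

abbrev Rd (d : ℕ) := EuclideanSpace ℝ (Fin d)

/-- The critical Sobolev exponent `p* = dp/(d-p)`. -/
def pStar (d : ℕ) (p : ℝ) : ℝ := d * p / (d - p)

/-- `g` is the weak gradient of `u` on `ℝ^d`: for every smooth compactly supported
test function `φ` and every coordinate `i`, `∫ u ∂ᵢφ = -∫ gᵢ φ`. -/
def IsWeakGrad (d : ℕ) (u : Rd d → ℝ) (g : Rd d → Rd d) : Prop :=
  ∀ φ : Rd d → ℝ, ContDiff ℝ (⊤ : ℕ∞) φ → HasCompactSupport φ → ∀ i : Fin d,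
    ∫ x, u x * fderiv ℝ φ x (EuclideanSpace.single i 1) = - ∫ x, g x i * φ x

/-- `u` belongs to the homogeneous Sobolev space `Ẇ^{1,p}(ℝ^d)` with weak gradient `g`:
`u ∈ L^{p*}`, `g ∈ L^p`, and `g` is the weak gradient of `u`. -/
def MemW1p (d : ℕ) (p : ℝ) (u : Rd d → ℝ) (g : Rd d → Rd d) : Prop :=
  MemLp u (ENNReal.ofReal (pStar d p)) volume ∧
  MemLp g (ENNReal.ofReal p) volume ∧ IsWeakGrad d u g

/-- The sharp Sobolev constant `S_{d,p}`. -/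
def SobolevS (d : ℕ) (p : ℝ) : ℝ :=
  sInf { r : ℝ | ∃ u g, MemW1p d p u g ∧ ¬ (u =ᵐ[volume] (fun _ => (0:ℝ))) ∧
    r = (∫ x, ‖g x‖ ^ p) / (∫ x, |u x| ^ pStar d p) ^ (p / pStar d p) }

/-! ### Auxiliary lemmas -/

lemma abs_rpow_sub_rpow_le {p : ℝ} (hp : 1 ≤ p) {s t M : ℝ} (hs : 0 ≤ s) (ht : 0 ≤ t)
    (hsM : s ≤ M) (htM : t ≤ M) : |s ^ p - t ^ p| ≤ p * M ^ (p - 1) * |s - t| := by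
  have key : ∀ x ∈ Set.Icc (0:ℝ) M, HasDerivWithinAt (fun x : ℝ => x ^ p)
      (p * x ^ (p - 1)) (Set.Icc 0 M) x := fun x _ =>
    (Real.hasDerivAt_rpow_const (Or.inr hp)).hasDerivWithinAt
  have bound : ∀ x ∈ Set.Icc (0:ℝ) M, ‖p * x ^ (p - 1)‖ ≤ p * M ^ (p - 1) := by
    intro x hx
    rw [Real.norm_eq_abs, abs_mul, abs_of_nonneg (by linarith : (0:ℝ) ≤ p),
      abs_of_nonneg (Real.rpow_nonneg hx.1 _)]
    exact mul_le_mul_of_nonneg_left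
      (Real.rpow_le_rpow hx.1 hx.2 (by linarith)) (by linarith)
  have := (convex_Icc (0:ℝ) M).norm_image_sub_le_of_norm_hasDerivWithin_le key bound
    ⟨ht, htM⟩ ⟨hs, hsM⟩
  simpa [Real.norm_eq_abs] using this

lemma gradient_continuous {d : ℕ} {f : Rd d → ℝ} (hf : ContDiff ℝ (⊤ : ℕ∞) f) :
    Continuous (gradient f) :=
  ((InnerProductSpace.toDual ℝ (Rd d)).symm.continuous).comp (hf.continuous_fderiv (by simp))

lemma gradient_eq_zero_of_eventually_const {d : ℕ} {f : Rd d → ℝ} {c : ℝ} {x : Rd d}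
    (h : ∀ᶠ y in nhds x, f y = c) : gradient f x = 0 := by
  have : fderiv ℝ f x = fderiv ℝ (fun _ => c) x := Filter.EventuallyEq.fderiv_eq h
  rw [gradient, this, fderiv_fun_const]
  simp

lemma gradient_zero_small {d : ℕ} {f : Rd d → ℝ} {c : ℝ}
    (hf : ∀ x ∈ ball (0 : Rd d) 1, f x = c) {y : Rd d} (hy : ‖y‖ < 1) :
    gradient f y = 0 := by
  apply gradient_eq_zero_of_eventually_const (c := c)
  filter_upwards [isOpen_ball.mem_nhds (mem_ball_zero_iff.2 hy)] using hf

lemma gradient_zero_large {d : ℕ} {f : Rd d → ℝ} {c : ℝ}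
    (hf : ∀ x ∉ ball (0 : Rd d) 2, f x = c) {y : Rd d} (hy : 2 < ‖y‖) :
    gradient f y = 0 := by
  apply gradient_eq_zero_of_eventually_const (c := c)
  have ho : IsOpen {z : Rd d | 2 < ‖z‖} := isOpen_lt continuous_const continuous_norm
  filter_upwards [ho.mem_nhds hy] with z hz
  exact hf z (fun hz' => absurd (mem_ball_zero_iff.1 hz') (not_lt.2 hz.le))

lemma exists_gradient_bound {d : ℕ} {f : Rd d → ℝ} (hf : ContDiff ℝ (⊤ : ℕ∞) f)
    (hz : ∀ y : Rd d, 2 < ‖y‖ → gradient f y = 0) :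
    ∃ K : ℝ, 0 ≤ K ∧ ∀ y : Rd d, ‖gradient f y‖ ≤ K := by
  have hc : Continuous fun y => ‖gradient f y‖ := (gradient_continuous hf).norm
  obtain ⟨K, hK⟩ := (isCompact_closedBall (0 : Rd d) 2).exists_bound_of_continuousOn
    hc.continuousOn
  refine ⟨max K 0, le_max_right _ _, fun y => ?_⟩
  rcases le_or_gt ‖y‖ 2 with h | h
  · exact le_trans (by simpa using hK y (mem_closedBall_zero_iff.2 h)) (le_max_left _ _)
  · simp [hz y h, le_max_right K 0]

/-- `(‖f‖_p)^p = ∫ ‖f‖^p` for `f ∈ L^p`. -/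
lemma toReal_eLpNorm_rpow {α : Type*} [MeasurableSpace α] {μ : Measure α}
    {E : Type*} [NormedAddCommGroup E] {p : ℝ} (hp : 0 < p) {f : α → E}
    (hf : MemLp f (ENNReal.ofReal p) μ) :
    ((eLpNorm f (ENNReal.ofReal p) μ).toReal) ^ p = ∫ x, ‖f x‖ ^ p ∂μ := by
  have h0 : ENNReal.ofReal p ≠ 0 := by simp [ENNReal.ofReal_eq_zero, not_le, hp]
  have htr : (ENNReal.ofReal p).toReal = p := ENNReal.toReal_ofReal hp.le
  rw [hf.eLpNorm_eq_integral_rpow_norm h0 ENNReal.ofReal_ne_top, htr,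
    ENNReal.toReal_ofReal (Real.rpow_nonneg
      (integral_nonneg fun x => Real.rpow_nonneg (norm_nonneg _) _) _),
    Real.rpow_inv_rpow (integral_nonneg fun x => Real.rpow_nonneg (norm_nonneg _) _) hp.ne']

set_option maxHeartbeats 2000000 in
lemma half_split (d : ℕ) (p : ℝ) (hp1 : 1 < p) (hpd : p < d)
    (f : Rd d → ℝ) (hfs : ContDiff ℝ (⊤ : ℕ∞) f) (hf01 : ∀ x, f x ∈ Set.Icc (0:ℝ) 1)
    (c1 c2 : ℝ) (hfin : ∀ x ∈ ball (0 : Rd d) 1, f x = c1)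
    (hfout : ∀ x ∉ ball (0 : Rd d) 2, f x = c2)
    (u : ℕ → Rd d → ℝ) (g : ℕ → Rd d → Rd d)
    (hW : ∀ n, MemW1p d p (u n) (g n))
    (M : ℝ) (hbdd : ∀ n, (∫ x, ‖g n x‖ ^ p) ≤ M)
    (X : ℕ → Rd d) (R : ℕ → ℝ) (hR : ∀ n, 0 < R n)
    (hann : Tendsto (fun n =>
        ∫ x in {x : Rd d | R n < ‖x - X n‖ ∧ ‖x - X n‖ < 2 * R n},
          |u n x| ^ pStar d p) atTop (nhds 0)) :
    Tendsto (fun n =>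
        (∫ x, f ((R n)⁻¹ • (x - X n)) ^ p * ‖g n x‖ ^ p)
        - (∫ x, ‖f ((R n)⁻¹ • (x - X n)) • g n x
              + (u n x * (R n)⁻¹) • gradient f ((R n)⁻¹ • (x - X n))‖ ^ p))
      atTop (nhds 0) := by
  have hp0 : (0:ℝ) < p := lt_trans one_pos hp1
  have hdR : (0:ℝ) < d := lt_trans hp0 hpd
  have hdiff : (0:ℝ) < d - p := by linarith
  set ps := pStar d p with hps_def
  have hps : 0 < ps := div_pos (mul_pos hdR hp0) hdiff
  have hpps : p ≤ ps := by
    rw [hps_def, pStar, le_div_iff₀ hdiff]; nlinarith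
  set P := ENNReal.ofReal p with hP_def
  set Ps := ENNReal.ofReal ps with hPs_def
  have hP0 : P ≠ 0 := by simp [hP_def, ENNReal.ofReal_eq_zero, not_le, hp0]
  have hPs0 : Ps ≠ 0 := by simp [hPs_def, ENNReal.ofReal_eq_zero, not_le, hps]
  have hPtop : P ≠ ⊤ := ENNReal.ofReal_ne_top
  have hP1 : 1 ≤ P := by rw [hP_def]; exact ENNReal.one_le_ofReal.2 hp1.le
  have hPle : P ≤ Ps := ENNReal.ofReal_le_ofReal hpps
  have hPt : P.toReal = p := ENNReal.toReal_ofReal hp0.le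
  have hPst : Ps.toReal = ps := ENNReal.toReal_ofReal hps.le
  -- gradient bounds
  set Gf := gradient f with hGf_def
  have hz1 : ∀ y : Rd d, ‖y‖ < 1 → Gf y = 0 := fun y hy => gradient_zero_small hfin hy
  have hz2 : ∀ y : Rd d, 2 < ‖y‖ → Gf y = 0 := fun y hy => gradient_zero_large hfout hy
  obtain ⟨K, hK0, hK⟩ := exists_gradient_bound hfs hz2
  -- the annulus sets
  set S : ℕ → Set (Rd d) := fun n => {x | R n ≤ ‖x - X n‖ ∧ ‖x - X n‖ ≤ 2 * R n} with hS_def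
  have hSclosed : ∀ n, IsClosed (S n) := by
    intro n
    have : S n = (fun x : Rd d => ‖x - X n‖) ⁻¹' (Set.Icc (R n) (2 * R n)) :=
      Set.ext fun x => Iff.rfl
    rw [this]
    exact IsClosed.preimage ((continuous_id.sub continuous_const).norm) isClosed_Icc
  have hSm : ∀ n, MeasurableSet (S n) := fun n => (hSclosed n).measurableSet
  set J : ℕ → ℝ := fun n => ∫ x in S n, |u n x| ^ ps with hJ_def
  have hJeq : ∀ n, (∫ x in {x : Rd d | R n < ‖x - X n‖ ∧ ‖x - X n‖ < 2 * R n},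
      |u n x| ^ pStar d p) = J n := by
    intro n
    apply setIntegral_congr_set
    rw [MeasureTheory.ae_eq_set]
    constructor
    · have hsub : {x : Rd d | R n < ‖x - X n‖ ∧ ‖x - X n‖ < 2 * R n} \ S n ⊆ ∅ := by
        intro x hx
        exact absurd ⟨hx.1.1.le, hx.1.2.le⟩ hx.2
      exact measure_mono_null hsub (by simp)
    · have hsub : S n \ {x : Rd d | R n < ‖x - X n‖ ∧ ‖x - X n‖ < 2 * R n} ⊆
          sphere (X n) (R n) ∪ sphere (X n) (2 * R n) := by
        intro x hx
        have h1 := hx.1.1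
        have h2 := hx.1.2
        have h3 := hx.2
        simp only [Set.mem_setOf_eq, not_and, not_lt] at h3
        rcases lt_or_eq_of_le h1 with h | h
        · right
          simp only [mem_sphere_iff_norm]
          linarith [h3 h]
        · left
          simp only [mem_sphere_iff_norm]
          linarith
      exact measure_mono_null hsub (measure_union_null
        (Measure.addHaar_sphere_of_ne_zero volume (X n) (hR n).ne')
        (Measure.addHaar_sphere_of_ne_zero volume (X n) (by have := hR n; positivity)))
  have hJ : Tendsto J atTop (nhds 0) := by
    have : (fun n => ∫ x in {x : Rd d | R n < ‖x - X n‖ ∧ ‖x - X n‖ < 2 * R n},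
        |u n x| ^ pStar d p) = J := funext hJeq
    rwa [this] at hann
  have hJ0 : ∀ n, 0 ≤ J n := fun n =>
    integral_nonneg fun x => Real.rpow_nonneg (abs_nonneg _) _
  -- geometry of the scaled point
  have hynorm : ∀ n (x : Rd d), ‖(R n)⁻¹ • (x - X n)‖ = (R n)⁻¹ * ‖x - X n‖ := by
    intro n x
    rw [norm_smul, Real.norm_eq_abs, abs_of_pos (inv_pos.2 (hR n))]
  have hmem : ∀ n (x : Rd d), x ∉ S n →
      ‖(R n)⁻¹ • (x - X n)‖ < 1 ∨ 2 < ‖(R n)⁻¹ • (x - X n)‖ := by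
    intro n x hx
    simp only [hS_def, Set.mem_setOf_eq, not_and, not_le] at hx
    rcases lt_or_ge ‖x - X n‖ (R n) with h | h
    · left
      rw [hynorm]
      rw [inv_mul_lt_iff₀ (hR n), mul_one]
      exact h
    · right
      rw [hynorm]
      have h2 := hx h
      rw [inv_mul_eq_div, lt_div_iff₀ (hR n)]
      linarith
  -- pointwise bound on w
  have hwnorm : ∀ n (x : Rd d),
      ‖(u n x * (R n)⁻¹) • Gf ((R n)⁻¹ • (x - X n))‖ ≤
        (S n).indicator (fun x => (K / R n) * |u n x|) x := by
    intro n x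
    by_cases hx : x ∈ S n
    · rw [Set.indicator_of_mem hx, norm_smul, Real.norm_eq_abs, abs_mul,
        abs_of_pos (inv_pos.2 (hR n))]
      calc |u n x| * (R n)⁻¹ * ‖Gf ((R n)⁻¹ • (x - X n))‖
          ≤ |u n x| * (R n)⁻¹ * K := by
            apply mul_le_mul_of_nonneg_left (hK _) (by have := hR n; positivity)
        _ = K / R n * |u n x| := by field_simp
    · rw [Set.indicator_of_notMem hx]
      rcases hmem n x hx with h | h
      · rw [hz1 _ h]
        simp
      · rw [hz2 _ h]
        simp
  -- measurability
  have hycont : ∀ n, Continuous fun x : Rd d => (R n)⁻¹ • (x - X n) := fun n =>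
    (by fun_prop)
  have hmu : ∀ n, AEStronglyMeasurable (u n) volume := fun n =>
    (hW n).1.aestronglyMeasurable
  have hmg : ∀ n, AEStronglyMeasurable (g n) volume := fun n =>
    (hW n).2.1.aestronglyMeasurable
  have hmw : ∀ n, AEStronglyMeasurable
      (fun x => (u n x * (R n)⁻¹) • Gf ((R n)⁻¹ • (x - X n))) volume := fun n =>
    ((hmu n).mul_const _).smul
      (((gradient_continuous hfs).comp (hycont n)).aestronglyMeasurable)
  have hmcf : ∀ n, AEStronglyMeasurable
      (fun x => f ((R n)⁻¹ • (x - X n)) • g n x) volume := fun n =>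
    ((hfs.continuous.comp (hycont n)).aestronglyMeasurable).smul (hmg n)
  -- ENNReal bound on the lower-order term
  set κ := volume (ball (0 : Rd d) 1) with hκ_def
  have hκfin : κ ≠ ⊤ := measure_ball_lt_top.ne
  set κt := κ.toReal with hκt_def
  have hκt0 : 0 ≤ κt := ENNReal.toReal_nonneg
  set e : ℝ := 1 / p - 1 / ps with he_def
  have he0 : 0 ≤ e := by
    rw [he_def, sub_nonneg]
    exact one_div_le_one_div_of_le hp0 hpps
  have hde : (d : ℝ) * e = 1 := by
    rw [he_def, hps_def, pStar]
    field_simp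
    ring
  set Cst : ℝ := 2 * K * κt ^ e with hCst_def
  have hCst0 : 0 ≤ Cst := by positivity
  have hwE : ∀ n, eLpNorm (fun x => (u n x * (R n)⁻¹) • Gf ((R n)⁻¹ • (x - X n))) P volume
      ≤ ENNReal.ofReal (Cst * J n ^ ps⁻¹) := by
    intro n
    have hmun : AEStronglyMeasurable (fun x => ‖u n x‖) (volume.restrict (S n)) :=
      ((hmu n).restrict).norm
    have hun : eLpNorm (fun x => ‖u n x‖) Ps (volume.restrict (S n))
        = ENNReal.ofReal (J n ^ ps⁻¹) := by
      rw [eLpNorm_norm,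
        ((hW n).1.restrict (S n)).eLpNorm_eq_integral_rpow_norm hPs0 ENNReal.ofReal_ne_top,
        hPst]
      simp only [Real.norm_eq_abs, hJ_def]
    have hvol : volume (S n) ≤ ENNReal.ofReal ((2 * R n) ^ d) * κ := by
      calc volume (S n) ≤ volume (closedBall (X n) (2 * R n)) := by
            apply measure_mono
            intro x hx
            simp only [mem_closedBall, dist_eq_norm]
            exact hx.2
        _ = ENNReal.ofReal ((2 * R n) ^ Module.finrank ℝ (Rd d)) * volume (ball (0:Rd d) 1) :=
            Measure.addHaar_closedBall volume _ (by have := hR n; positivity)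
        _ = ENNReal.ofReal ((2 * R n) ^ d) * κ := by rw [finrank_euclideanSpace_fin]
    have hcomp : eLpNorm (fun x => ‖u n x‖) P (volume.restrict (S n))
        ≤ ENNReal.ofReal (J n ^ ps⁻¹) * (ENNReal.ofReal ((2 * R n) ^ d) * κ) ^ e := by
      calc eLpNorm (fun x => ‖u n x‖) P (volume.restrict (S n))
          ≤ eLpNorm (fun x => ‖u n x‖) Ps (volume.restrict (S n)) *
            (volume.restrict (S n)) Set.univ ^ (1 / P.toReal - 1 / Ps.toReal) :=
            eLpNorm_le_eLpNorm_mul_rpow_measure_univ hPle hmun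
        _ = ENNReal.ofReal (J n ^ ps⁻¹) * (volume (S n)) ^ e := by
            rw [hun, Measure.restrict_apply_univ, hPt, hPst, ← he_def]
        _ ≤ ENNReal.ofReal (J n ^ ps⁻¹) * (ENNReal.ofReal ((2 * R n) ^ d) * κ) ^ e := by
            exact mul_le_mul_right (ENNReal.rpow_le_rpow hvol he0) _
    calc eLpNorm (fun x => (u n x * (R n)⁻¹) • Gf ((R n)⁻¹ • (x - X n))) P volume
        ≤ eLpNorm ((S n).indicator (fun x => (K / R n) * |u n x|)) P volume :=
          eLpNorm_mono_real (hwnorm n)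
      _ = eLpNorm (fun x => (K / R n) * |u n x|) P (volume.restrict (S n)) :=
          eLpNorm_indicator_eq_eLpNorm_restrict (hSm n)
      _ = ‖K / R n‖₊ • eLpNorm (fun x => ‖u n x‖) P (volume.restrict (S n)) := by
          rw [show (fun x : Rd d => (K / R n) * |u n x|)
              = (K / R n) • (fun x : Rd d => ‖u n x‖) by
            funext x; simp [Real.norm_eq_abs]]
          exact eLpNorm_const_smul _ _ _ _
      _ ≤ ‖K / R n‖₊ • (ENNReal.ofReal (J n ^ ps⁻¹) * (ENNReal.ofReal ((2 * R n) ^ d) * κ) ^ e) := by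
          rw [ENNReal.smul_def, ENNReal.smul_def, smul_eq_mul, smul_eq_mul]
          exact mul_le_mul_right hcomp _
      _ = ENNReal.ofReal (Cst * J n ^ ps⁻¹) := by
          have hKR : (0:ℝ) ≤ K / R n := div_nonneg hK0 (hR n).le
          have h2R : (0:ℝ) ≤ (2 * R n) ^ d := by have := hR n; positivity
          rw [ENNReal.smul_def, smul_eq_mul, ← enorm_eq_nnnorm, Real.enorm_eq_ofReal hKR,
            ← ENNReal.ofReal_toReal hκfin, ← hκt_def, ← ENNReal.ofReal_mul h2R,
            ENNReal.ofReal_rpow_of_nonneg (mul_nonneg h2R hκt0) he0,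
            ← ENNReal.ofReal_mul (Real.rpow_nonneg (hJ0 n) _),
            ← ENNReal.ofReal_mul hKR]
          congr 1
          have hRne : R n ≠ 0 := (hR n).ne'
          have hexp : ((2 * R n) ^ d * κt) ^ e = 2 * R n * κt ^ e := by
            rw [Real.mul_rpow h2R hκt0, ← Real.rpow_natCast (2 * R n) d,
              ← Real.rpow_mul (by have := hR n; positivity), hde, Real.rpow_one]
          rw [hexp, hCst_def]
          field_simp
  -- MemLp facts
  have hwLp : ∀ n, MemLp (fun x => (u n x * (R n)⁻¹) • Gf ((R n)⁻¹ • (x - X n))) P volume :=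
    fun n => ⟨hmw n, lt_of_le_of_lt (hwE n) ENNReal.ofReal_lt_top⟩
  have hgLp : ∀ n, MemLp (g n) P volume := fun n => (hW n).2.1
  have hcfle : ∀ n (x : Rd d), ‖f ((R n)⁻¹ • (x - X n)) • g n x‖ ≤ ‖g n x‖ := by
    intro n x
    rw [norm_smul, Real.norm_eq_abs, abs_of_nonneg (hf01 _).1]
    calc f ((R n)⁻¹ • (x - X n)) * ‖g n x‖ ≤ 1 * ‖g n x‖ :=
          mul_le_mul_of_nonneg_right (hf01 _).2 (norm_nonneg _)
      _ = ‖g n x‖ := one_mul _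
  have hcfLp : ∀ n, MemLp (fun x => f ((R n)⁻¹ • (x - X n)) • g n x) P volume := fun n =>
    (hgLp n).of_le (hmcf n) (Filter.Eventually.of_forall (hcfle n))
  have haLp : ∀ n, MemLp (fun x => f ((R n)⁻¹ • (x - X n)) • g n x
      + (u n x * (R n)⁻¹) • Gf ((R n)⁻¹ • (x - X n))) P volume := fun n =>
    (hcfLp n).add (hwLp n)
  -- names for the real quantities
  have hM0 : 0 ≤ M := le_trans (integral_nonneg fun x => Real.rpow_nonneg (norm_nonneg _) _)
    (hbdd 0)
  set M' : ℝ := M ^ p⁻¹ with hM'_def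
  have hM'0 : 0 ≤ M' := Real.rpow_nonneg hM0 _
  set ω : ℕ → ℝ := fun n =>
    (eLpNorm (fun x => (u n x * (R n)⁻¹) • Gf ((R n)⁻¹ • (x - X n))) P volume).toReal
    with hω_def
  have hω0 : ∀ n, 0 ≤ ω n := fun n => ENNReal.toReal_nonneg
  have hωle : ∀ n, ω n ≤ Cst * J n ^ ps⁻¹ := fun n =>
    ENNReal.toReal_le_of_le_ofReal (mul_nonneg hCst0 (Real.rpow_nonneg (hJ0 n) _)) (hwE n)
  have hωt : Tendsto ω atTop (nhds 0) := by
    have h1 : Tendsto (fun n => J n ^ ps⁻¹) atTop (nhds 0) := by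
      have hc : ContinuousAt (fun x : ℝ => x ^ ps⁻¹) 0 :=
        Real.continuousAt_rpow_const 0 ps⁻¹ (Or.inr (by positivity))
      have h2 := hc.tendsto.comp hJ
      simpa [Real.zero_rpow (inv_ne_zero hps.ne'), Function.comp_def] using h2
    exact squeeze_zero hω0 hωle (by simpa using h1.const_mul Cst)
  -- identities between integrals and Lp norms
  have hsCp : ∀ n, ((eLpNorm (fun x => f ((R n)⁻¹ • (x - X n)) • g n x) P volume).toReal) ^ p
      = ∫ x, f ((R n)⁻¹ • (x - X n)) ^ p * ‖g n x‖ ^ p := by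
    intro n
    have h1 := toReal_eLpNorm_rpow hp0 (hcfLp n)
    rw [h1]
    refine integral_congr_ae (Filter.Eventually.of_forall fun x => ?_)
    show ‖f ((R n)⁻¹ • (x - X n)) • g n x‖ ^ p = f ((R n)⁻¹ • (x - X n)) ^ p * ‖g n x‖ ^ p
    rw [norm_smul, Real.norm_eq_abs, abs_of_nonneg (hf01 _).1,
      Real.mul_rpow (hf01 _).1 (norm_nonneg _)]
  have hsAp : ∀ n, ((eLpNorm (fun x => f ((R n)⁻¹ • (x - X n)) • g n x
        + (u n x * (R n)⁻¹) • Gf ((R n)⁻¹ • (x - X n))) P volume).toReal) ^ p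
      = ∫ x, ‖f ((R n)⁻¹ • (x - X n)) • g n x
        + (u n x * (R n)⁻¹) • Gf ((R n)⁻¹ • (x - X n))‖ ^ p := fun n =>
    toReal_eLpNorm_rpow hp0 (haLp n)
  -- bounds
  have hsGle : ∀ n, (eLpNorm (g n) P volume).toReal ≤ M' := by
    intro n
    have h1 : ((eLpNorm (g n) P volume).toReal) ^ p ≤ M := by
      rw [toReal_eLpNorm_rpow hp0 (hgLp n)]
      exact hbdd n
    calc (eLpNorm (g n) P volume).toReal
        = (((eLpNorm (g n) P volume).toReal) ^ p) ^ p⁻¹ :=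
          (Real.rpow_rpow_inv ENNReal.toReal_nonneg hp0.ne').symm
      _ ≤ M ^ p⁻¹ := Real.rpow_le_rpow (Real.rpow_nonneg ENNReal.toReal_nonneg _) h1
          (by positivity)
  have hsCle : ∀ n, (eLpNorm (fun x => f ((R n)⁻¹ • (x - X n)) • g n x) P volume).toReal
      ≤ M' := by
    intro n
    refine le_trans (ENNReal.toReal_mono (hgLp n).2.ne (eLpNorm_mono (hcfle n))) (hsGle n)
  have habs : ∀ n, |(eLpNorm (fun x => f ((R n)⁻¹ • (x - X n)) • g n x
        + (u n x * (R n)⁻¹) • Gf ((R n)⁻¹ • (x - X n))) P volume).toReal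
      - (eLpNorm (fun x => f ((R n)⁻¹ • (x - X n)) • g n x) P volume).toReal| ≤ ω n := by
    intro n
    rw [abs_sub_le_iff]
    constructor
    · have h1 : eLpNorm (fun x => f ((R n)⁻¹ • (x - X n)) • g n x
          + (u n x * (R n)⁻¹) • Gf ((R n)⁻¹ • (x - X n))) P volume
          ≤ eLpNorm (fun x => f ((R n)⁻¹ • (x - X n)) • g n x) P volume
            + eLpNorm (fun x => (u n x * (R n)⁻¹) • Gf ((R n)⁻¹ • (x - X n))) P volume :=
        eLpNorm_add_le (hmcf n) (hmw n) hP1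
      have h2 := ENNReal.toReal_mono
        (ENNReal.add_ne_top.2 ⟨(hcfLp n).2.ne, (hwLp n).2.ne⟩) h1
      rw [ENNReal.toReal_add (hcfLp n).2.ne (hwLp n).2.ne] at h2
      linarith
    · have h1 : eLpNorm (fun x => f ((R n)⁻¹ • (x - X n)) • g n x) P volume
          ≤ eLpNorm (fun x => f ((R n)⁻¹ • (x - X n)) • g n x
            + (u n x * (R n)⁻¹) • Gf ((R n)⁻¹ • (x - X n))) P volume
            + eLpNorm (fun x => (u n x * (R n)⁻¹) • Gf ((R n)⁻¹ • (x - X n))) P volume := by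
        have heq : (fun x => f ((R n)⁻¹ • (x - X n)) • g n x)
            = fun x => (f ((R n)⁻¹ • (x - X n)) • g n x
              + (u n x * (R n)⁻¹) • Gf ((R n)⁻¹ • (x - X n)))
              - (u n x * (R n)⁻¹) • Gf ((R n)⁻¹ • (x - X n)) := by
          funext x
          simp
        rw [heq]
        exact eLpNorm_sub_le ((hmcf n).add (hmw n)) (hmw n) hP1
      have h2 := ENNReal.toReal_mono
        (ENNReal.add_ne_top.2 ⟨(haLp n).2.ne, (hwLp n).2.ne⟩) h1
      rw [ENNReal.toReal_add (haLp n).2.ne (hwLp n).2.ne] at h2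
      linarith
  -- the squeeze
  have hD : Tendsto (fun n => p * (M' + ω n) ^ (p - 1) * ω n) atTop (nhds 0) := by
    have h1 : Tendsto (fun n => M' + ω n) atTop (nhds M') := by
      simpa using tendsto_const_nhds.add hωt
    have h2 := h1.rpow_const (Or.inr (by linarith : (0:ℝ) ≤ p - 1))
    have h3 := ((tendsto_const_nhds (x := p)).mul h2).mul hωt
    simpa using h3
  apply squeeze_zero_norm _ hD
  intro n
  rw [Real.norm_eq_abs, ← hsCp n, ← hsAp n]
  have hb1 : (eLpNorm (fun x => f ((R n)⁻¹ • (x - X n)) • g n x) P volume).toReal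
      ≤ M' + ω n := le_trans (hsCle n) (by linarith [hω0 n])
  have hb2 : (eLpNorm (fun x => f ((R n)⁻¹ • (x - X n)) • g n x
      + (u n x * (R n)⁻¹) • Gf ((R n)⁻¹ • (x - X n))) P volume).toReal ≤ M' + ω n := by
    have h1 := (abs_sub_le_iff.1 (habs n)).1
    linarith [hsCle n]
  have hkey := abs_rpow_sub_rpow_le hp1.le ENNReal.toReal_nonneg ENNReal.toReal_nonneg
    hb1 hb2
  refine le_trans hkey ?_
  have h2 : |(eLpNorm (fun x => f ((R n)⁻¹ • (x - X n)) • g n x) P volume).toReal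
      - (eLpNorm (fun x => f ((R n)⁻¹ • (x - X n)) • g n x
        + (u n x * (R n)⁻¹) • Gf ((R n)⁻¹ • (x - X n))) P volume).toReal| ≤ ω n := by
    rw [abs_sub_comm]
    exact habs n
  exact mul_le_mul_of_nonneg_left h2
    (mul_nonneg hp0.le (Real.rpow_nonneg (by linarith [hω0 n]) _))

set_option maxHeartbeats 1000000 in
/-- IMS-type localization for `Ẇ^{1,p}`: for a partition of unity `χ^p + η^p = 1`
rescaled to the annuli `B_{2R_n}(x_n) \ B_{R_n}(x_n)`, if the `p*`-mass of `u_n` on the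
annulus vanishes, then the `L^p` energy of the gradient splits. Here
`∇(χ_n u_n) = χ_n ∇u_n + u_n ∇χ_n`. -/
theorem ims_splitting (d : ℕ) (p : ℝ) (hd : 2 ≤ d) (hp1 : 1 < p) (hpd : p < d)
    (χ η : Rd d → ℝ) (hχs : ContDiff ℝ (⊤ : ℕ∞) χ) (hηs : ContDiff ℝ (⊤ : ℕ∞) η)
    (hχ01 : ∀ x, χ x ∈ Set.Icc (0:ℝ) 1) (hη01 : ∀ x, η x ∈ Set.Icc (0:ℝ) 1)
    (hpart : ∀ x, χ x ^ p + η x ^ p = 1)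
    (hχ1 : ∀ x ∈ ball (0 : Rd d) 1, χ x = 1)
    (hχ0 : ∀ x ∉ ball (0 : Rd d) 2, χ x = 0)
    (u : ℕ → Rd d → ℝ) (g : ℕ → Rd d → Rd d)
    (hW : ∀ n, MemW1p d p (u n) (g n))
    (hbdd : ∃ M : ℝ, ∀ n, (∫ x, ‖g n x‖ ^ p) ≤ M)
    (X : ℕ → Rd d) (R : ℕ → ℝ) (hR : ∀ n, 0 < R n)
    (hann : Tendsto (fun n =>
        ∫ x in {x : Rd d | R n < ‖x - X n‖ ∧ ‖x - X n‖ < 2 * R n},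
          |u n x| ^ pStar d p) atTop (nhds 0)) :
    Tendsto (fun n =>
        (∫ x, ‖g n x‖ ^ p)
        - (∫ x, ‖χ ((R n)⁻¹ • (x - X n)) • g n x
              + (u n x * (R n)⁻¹) • gradient χ ((R n)⁻¹ • (x - X n))‖ ^ p)
        - (∫ x, ‖η ((R n)⁻¹ • (x - X n)) • g n x
              + (u n x * (R n)⁻¹) • gradient η ((R n)⁻¹ • (x - X n))‖ ^ p))
      atTop (nhds 0) := by
  obtain ⟨M, hM⟩ := hbdd
  have hp0 : (0:ℝ) < p := lt_trans one_pos hp1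
  have hηin : ∀ x ∈ ball (0 : Rd d) 1, η x = 0 := by
    intro x hx
    have h1 : η x ^ p = 0 := by
      have h := hpart x
      rw [hχ1 x hx, Real.one_rpow] at h
      linarith
    by_contra hne
    have hpos : 0 < η x := lt_of_le_of_ne (hη01 x).1 (Ne.symm hne)
    have := Real.rpow_pos_of_pos hpos p
    linarith
  have hηout : ∀ x ∉ ball (0 : Rd d) 2, η x = 1 := by
    intro x hx
    have h1 : η x ^ p = 1 := by
      have h := hpart x
      rw [hχ0 x hx, Real.zero_rpow hp0.ne'] at h
      linarith
    by_contra hne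
    have hlt : η x < 1 := lt_of_le_of_ne (hη01 x).2 hne
    have := Real.rpow_lt_one (hη01 x).1 hlt hp0
    linarith
  have Tχ := half_split d p hp1 hpd χ hχs hχ01 1 0 hχ1 hχ0 u g hW M hM X R hR hann
  have Tη := half_split d p hp1 hpd η hηs hη01 0 1 hηin hηout u g hW M hM X R hR hann
  have hsum : ∀ n, (∫ x, χ ((R n)⁻¹ • (x - X n)) ^ p * ‖g n x‖ ^ p)
      + (∫ x, η ((R n)⁻¹ • (x - X n)) ^ p * ‖g n x‖ ^ p) = ∫ x, ‖g n x‖ ^ p := by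
    intro n
    have hycont : Continuous fun x : Rd d => (R n)⁻¹ • (x - X n) :=
      by fun_prop
    have hmg : AEStronglyMeasurable (g n) volume := (hW n).2.1.aestronglyMeasurable
    have hint : Integrable (fun x => ‖g n x‖ ^ p) volume := by
      have h := (hW n).2.1.integrable_norm_rpow
        (by simp [ENNReal.ofReal_eq_zero, not_le, hp0]) ENNReal.ofReal_ne_top
      rwa [ENNReal.toReal_ofReal hp0.le] at h
    have key : ∀ (f : Rd d → ℝ), Continuous f → (∀ x, f x ∈ Set.Icc (0:ℝ) 1) →
        Integrable (fun x => f ((R n)⁻¹ • (x - X n)) ^ p * ‖g n x‖ ^ p) volume := by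
      intro f hf hf01
      apply hint.mono
      · apply AEStronglyMeasurable.mul
        · exact ((hf.comp hycont).measurable.pow_const p).aestronglyMeasurable
        · exact (hmg.norm.aemeasurable.pow_const p).aestronglyMeasurable
      · apply Filter.Eventually.of_forall
        intro x
        rw [Real.norm_eq_abs, Real.norm_eq_abs, abs_mul,
          abs_of_nonneg (Real.rpow_nonneg (hf01 _).1 _),
          abs_of_nonneg (Real.rpow_nonneg (norm_nonneg _) _)]
        calc f ((R n)⁻¹ • (x - X n)) ^ p * ‖g n x‖ ^ p
            ≤ 1 * ‖g n x‖ ^ p := by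
              apply mul_le_mul_of_nonneg_right _ (Real.rpow_nonneg (norm_nonneg _) _)
              exact Real.rpow_le_one (hf01 _).1 (hf01 _).2 hp0.le
          _ = ‖g n x‖ ^ p := one_mul _
    calc (∫ x, χ ((R n)⁻¹ • (x - X n)) ^ p * ‖g n x‖ ^ p)
        + (∫ x, η ((R n)⁻¹ • (x - X n)) ^ p * ‖g n x‖ ^ p)
        = ∫ x, (χ ((R n)⁻¹ • (x - X n)) ^ p * ‖g n x‖ ^ p
            + η ((R n)⁻¹ • (x - X n)) ^ p * ‖g n x‖ ^ p) :=
          (integral_add (key χ hχs.continuous hχ01) (key η hηs.continuous hη01)).symm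
      _ = ∫ x, ‖g n x‖ ^ p := by
          refine integral_congr_ae (Filter.Eventually.of_forall fun x => ?_)
          show χ ((R n)⁻¹ • (x - X n)) ^ p * ‖g n x‖ ^ p
              + η ((R n)⁻¹ • (x - X n)) ^ p * ‖g n x‖ ^ p = ‖g n x‖ ^ p
          have h := hpart ((R n)⁻¹ • (x - X n))
          rw [← add_mul, h, one_mul]
  have hfun : (fun n =>
        (∫ x, ‖g n x‖ ^ p)
        - (∫ x, ‖χ ((R n)⁻¹ • (x - X n)) • g n x
              + (u n x * (R n)⁻¹) • gradient χ ((R n)⁻¹ • (x - X n))‖ ^ p)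
        - (∫ x, ‖η ((R n)⁻¹ • (x - X n)) • g n x
              + (u n x * (R n)⁻¹) • gradient η ((R n)⁻¹ • (x - X n))‖ ^ p))
      = fun n =>
        ((∫ x, χ ((R n)⁻¹ • (x - X n)) ^ p * ‖g n x‖ ^ p)
          - (∫ x, ‖χ ((R n)⁻¹ • (x - X n)) • g n x
              + (u n x * (R n)⁻¹) • gradient χ ((R n)⁻¹ • (x - X n))‖ ^ p))
        + ((∫ x, η ((R n)⁻¹ • (x - X n)) ^ p * ‖g n x‖ ^ p)
          - (∫ x, ‖η ((R n)⁻¹ • (x - X n)) • g n x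
              + (u n x * (R n)⁻¹) • gradient η ((R n)⁻¹ • (x - X n))‖ ^ p)) := by
    funext n
    linarith [hsum n]
  rw [hfun]
  simpa using Tχ.add Tη
end
end

section
/- Let d ≥ 2 be an integer and 1 < p < d. Let (u_n) ⊂ Ẇ^{1,p}(ℝ^d) and u_0 ∈ Ẇ^{1,p}(ℝ^d) satisfy: ∫_{ℝ^d}|u_n|^{p*} = 1 for all n, ∫_{ℝ^d}|∇u_n|^p → S_{d,p}, ∇u_n ⇀ ∇u_0 weakly in L^p(ℝ^d; ℝ^d) (i.e. ∫ ⟨∇u_n, h⟩ → ∫ ⟨∇u_0, h⟩ for every h ∈ L^{p'}(ℝ^d; ℝ^d), p' = p/(p-1)), and u_n → u_0 strongly in L^{p*}(ℝ^d). Then u_0 is an optimizer, i.e. ∫|∇u_0|^p = S_{d,p}(∫|u_0|^{p*})^{p/p*} with ∫|u_0|^{p*} = 1, and moreover ∇u_n → ∇u_0 strongly in L^p(ℝ^d; ℝ^d). -/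
open MeasureTheory Filter Metric

noncomputable section

section AuxLemmas
open Real Set RealInnerProductSpace

variable {E : Type*} [NormedAddCommGroup E] [InnerProductSpace ℝ E]

private lemma young_strict {p q : ℝ} (hpq : p.HolderConjugate q) {t B : ℝ} (ht : 0 ≤ t) (hB : 0 < B)
    (hne : t ≠ B) : t * B ^ (p - 1) < t ^ p / p + B ^ p / q := by
  have hp0 : 0 < p := hpq.pos
  have hq0 : 0 < q := hpq.symm.pos
  rcases eq_or_lt_of_le ht with h0 | ht0
  · have : t = 0 := h0.symm
    subst this
    rw [Real.zero_rpow hpq.ne_zero, zero_mul, zero_div, zero_add]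
    positivity
  · have hx : (0:ℝ) < t ^ p := Real.rpow_pos_of_pos ht0 p
    have hy : (0:ℝ) < B ^ p := Real.rpow_pos_of_pos hB p
    have hxy : t ^ p ≠ B ^ p := by
      rcases hne.lt_or_gt with h | h
      · exact ne_of_lt (Real.rpow_lt_rpow ht h hp0)
      · exact (ne_of_lt (Real.rpow_lt_rpow hB.le h hp0)).symm
    have key := strictConcaveOn_log_Ioi.2 (Set.mem_Ioi.2 hx) (Set.mem_Ioi.2 hy) hxy
      hpq.inv_pos hpq.symm.inv_pos hpq.inv_add_inv_eq_one
    simp only [smul_eq_mul] at key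
    have hlhs : p⁻¹ * Real.log (t ^ p) + q⁻¹ * Real.log (B ^ p)
        = Real.log (t * B ^ (p - 1)) := by
      rw [Real.log_rpow ht0, Real.log_rpow hB,
        Real.log_mul (ne_of_gt ht0) (ne_of_gt (Real.rpow_pos_of_pos hB _)),
        Real.log_rpow hB]
      have hd : q⁻¹ * p = p - 1 := by
        have := hpq.div_conj_eq_sub_one
        rw [div_eq_mul_inv] at this
        linarith [this]
      have : q⁻¹ * (p * Real.log B) = (p - 1) * Real.log B := by
        rw [← hd]; ring
      rw [this]
      field_simp
    rw [hlhs] at key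
    have hpos : 0 < t * B ^ (p - 1) := mul_pos ht0 (Real.rpow_pos_of_pos hB _)
    have h2 := Real.exp_lt_exp.2 key
    rw [Real.exp_log hpos, Real.exp_log (by positivity)] at h2
    rw [div_eq_inv_mul, div_eq_inv_mul]
    exact h2

private lemma young_ge {p q : ℝ} (hpq : p.HolderConjugate q) {t B : ℝ} (ht : 0 ≤ t) (hB : 0 ≤ B) :
    t * B ^ (p - 1) ≤ t ^ p / p + B ^ p / q := by
  have h := Real.young_inequality_of_nonneg ht (Real.rpow_nonneg hB (p - 1)) hpq
  rwa [← Real.rpow_mul hB, hpq.sub_one_mul_conj] at h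

private lemma rpow_step {B p : ℝ} (hB : 0 < B) : B ^ (p - 2) * B = B ^ (p - 1) := by
  rw [← Real.rpow_add_one (ne_of_gt hB) (p - 2)]
  congr 1
  ring

private lemma gap_nonneg {p q : ℝ} (hpq : p.HolderConjugate q) (a b : E) :
    ‖b‖ ^ (p - 2) * ⟪a, b⟫ ≤ ‖a‖ ^ p / p + ‖b‖ ^ p / q := by
  rcases eq_or_ne b 0 with rfl | hb
  · simp only [inner_zero_right, mul_zero, norm_zero, Real.zero_rpow hpq.ne_zero]
    have h1 := hpq.pos
    have h2 := hpq.symm.pos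
    positivity
  · have hB : 0 < ‖b‖ := norm_pos_iff.2 hb
    have h1 : ‖b‖ ^ (p - 2) * ⟪a, b⟫ ≤ ‖a‖ * ‖b‖ ^ (p - 1) := by
      have h2 : ‖b‖ ^ (p - 2) * ⟪a, b⟫ ≤ ‖b‖ ^ (p - 2) * (‖a‖ * ‖b‖) :=
        mul_le_mul_of_nonneg_left (real_inner_le_norm a b) (Real.rpow_nonneg hB.le _)
      have h3 : ‖b‖ ^ (p - 2) * (‖a‖ * ‖b‖) = ‖a‖ * ‖b‖ ^ (p - 1) := by
        rw [← rpow_step hB]; ring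
      linarith
    exact h1.trans (young_ge hpq (norm_nonneg a) (norm_nonneg b))

private lemma eq_of_gap_eq_zero {p q : ℝ} (hpq : p.HolderConjugate q) {a b : E} (hb : b ≠ 0)
    (h : ‖a‖ ^ p / p + ‖b‖ ^ p / q - ‖b‖ ^ (p - 2) * ⟪a, b⟫ = 0) : a = b := by
  have hB : 0 < ‖b‖ := norm_pos_iff.2 hb
  have h3 : ‖b‖ ^ (p - 2) * (‖a‖ * ‖b‖) = ‖a‖ * ‖b‖ ^ (p - 1) := by
    rw [← rpow_step hB]; ring
  have hg1 : (0:ℝ) ≤ ‖a‖ * ‖b‖ ^ (p - 1) - ‖b‖ ^ (p - 2) * ⟪a, b⟫ := by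
    have h2 : ‖b‖ ^ (p - 2) * ⟪a, b⟫ ≤ ‖b‖ ^ (p - 2) * (‖a‖ * ‖b‖) :=
      mul_le_mul_of_nonneg_left (real_inner_le_norm a b) (Real.rpow_nonneg hB.le _)
    linarith
  have hg2 : (0:ℝ) ≤ ‖a‖ ^ p / p + ‖b‖ ^ p / q - ‖a‖ * ‖b‖ ^ (p - 1) := by
    linarith [young_ge hpq (norm_nonneg a) hB.le]
  have hg1z : ‖a‖ * ‖b‖ ^ (p - 1) = ‖b‖ ^ (p - 2) * ⟪a, b⟫ := by linarith
  have hnorm : ‖a‖ = ‖b‖ := by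
    by_contra hne
    have := young_strict hpq (norm_nonneg a) hB hne
    linarith
  have hinner : ⟪a, b⟫ = ‖b‖ * ‖b‖ := by
    have hBp2 : (0:ℝ) < ‖b‖ ^ (p - 2) := Real.rpow_pos_of_pos hB _
    have he : ‖b‖ ^ (p - 2) * ⟪a, b⟫ = ‖b‖ ^ (p - 2) * (‖b‖ * ‖b‖) := by
      rw [← hg1z, hnorm, ← rpow_step hB]; ring
    exact mul_left_cancel₀ (ne_of_gt hBp2) he
  have hsq : ‖a - b‖ ^ (2:ℕ) = 0 := by
    rw [norm_sub_sq_real, hinner, hnorm]; ring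
  have h0 : ‖a - b‖ = 0 := (pow_eq_zero_iff (two_ne_zero)).mp hsq
  rwa [norm_eq_zero, sub_eq_zero] at h0

private lemma tendsto_of_gap_tendsto_zero [FiniteDimensional ℝ E] {p q : ℝ}
    (hpq : p.HolderConjugate q) {b : E} (hb : b ≠ 0) {a : ℕ → E}
    (h : Tendsto (fun k => ‖a k‖ ^ p / p + ‖b‖ ^ p / q - ‖b‖ ^ (p - 2) * ⟪a k, b⟫) atTop
      (nhds 0)) : Tendsto a atTop (nhds b) := by
  have hp0 : 0 < p := hpq.pos
  have hB : 0 < ‖b‖ := norm_pos_iff.2 hb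
  set ψ : ℕ → ℝ := fun k => ‖a k‖ ^ p / p + ‖b‖ ^ p / q - ‖b‖ ^ (p - 2) * ⟪a k, b⟫ with hψ
  obtain ⟨M, hM⟩ := h.bddAbove_range
  have hM' : ∀ k, ψ k ≤ M := fun k => hM ⟨k, rfl⟩
  have hM0 : 0 ≤ M := by
    refine le_trans ?_ (hM' 0)
    have := gap_nonneg hpq (a 0) b
    simp only [hψ]
    linarith
  set K : ℝ := p * M + p * (‖b‖ ^ (p - 1)) with hK
  set R : ℝ := max 1 (K ^ (p - 1)⁻¹) with hR
  have hbound : ∀ k, ‖a k‖ ≤ R := by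
    intro k
    set t := ‖a k‖ with htdef
    have ht : 0 ≤ t := norm_nonneg _
    rcases le_or_gt t 1 with h1 | h1
    · exact h1.trans (le_max_left _ _)
    · have ht0 : 0 < t := lt_trans zero_lt_one h1
      have hgap : ‖b‖ ^ (p - 2) * ⟪a k, b⟫ ≤ t * ‖b‖ ^ (p - 1) := by
        have h2 : ‖b‖ ^ (p - 2) * ⟪a k, b⟫ ≤ ‖b‖ ^ (p - 2) * (t * ‖b‖) :=
          mul_le_mul_of_nonneg_left (real_inner_le_norm (a k) b) (Real.rpow_nonneg hB.le _)
        have h3 : ‖b‖ ^ (p - 2) * (t * ‖b‖) = t * ‖b‖ ^ (p - 1) := by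
          rw [← rpow_step hB]; ring
        linarith
      have hq0 : 0 < ‖b‖ ^ p / q := by
        have := hpq.symm.pos; positivity
      have key : t ^ p / p ≤ M + t * ‖b‖ ^ (p - 1) := by
        have := hM' k
        rw [hψ] at this
        simp only at this
        linarith
      have hKt : t ^ p ≤ K * t := by
        have h4 : t ^ p ≤ p * M + p * t * ‖b‖ ^ (p - 1) := by
          have := mul_le_mul_of_nonneg_left key hp0.le
          rw [mul_div_cancel₀ _ (ne_of_gt hp0)] at this
          linarith [this]
        have h5 : p * M ≤ p * M * t := by
          nlinarith [mul_nonneg hp0.le hM0]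
        have h6 : p * t * ‖b‖ ^ (p - 1) = p * ‖b‖ ^ (p - 1) * t := by ring
        rw [hK]; nlinarith [h4]
      have h7 : t ^ (p - 1) * t ≤ K * t := by
        have : t ^ (p - 1) * t = t ^ p := by
          rw [← Real.rpow_add_one (ne_of_gt ht0) (p - 1)]
          congr 1; ring
        rw [this]; exact hKt
      have h8 : t ^ (p - 1) ≤ K := le_of_mul_le_mul_right h7 ht0
      have h9 : (t ^ (p - 1)) ^ (p - 1)⁻¹ ≤ K ^ (p - 1)⁻¹ :=
        Real.rpow_le_rpow (Real.rpow_nonneg ht0.le _) h8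
          (by have := hpq.sub_one_pos; positivity)
      have h10 : (t ^ (p - 1)) ^ (p - 1)⁻¹ = t := by
        rw [← Real.rpow_mul ht0.le, mul_inv_cancel₀ hpq.sub_one_ne_zero, Real.rpow_one]
      rw [h10] at h9
      exact h9.trans (le_max_right _ _)
  apply tendsto_of_subseq_tendsto
  intro ns hns
  obtain ⟨c, _, φ, hφmono, hφ⟩ := (isCompact_closedBall (0:E) R).tendsto_subseq
    (fun k => by simpa [mem_closedBall, dist_eq_norm] using hbound (ns k))
  have hψc : Tendsto (fun j => ψ (ns (φ j))) atTop
      (nhds (‖c‖ ^ p / p + ‖b‖ ^ p / q - ‖b‖ ^ (p - 2) * ⟪c, b⟫)) := by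
    have hcont : Continuous fun x : E => ‖x‖ ^ p / p + ‖b‖ ^ p / q - ‖b‖ ^ (p - 2) * ⟪x, b⟫ := by
      apply Continuous.sub
      · apply Continuous.add
        · exact ((Real.continuous_rpow_const hp0.le).comp continuous_norm).div_const p
        · exact continuous_const
      · exact continuous_const.mul (continuous_id.inner continuous_const)
    exact (hcont.tendsto c).comp hφ
  have hψ0 : Tendsto (fun j => ψ (ns (φ j))) atTop (nhds 0) :=
    h.comp (hns.comp (hφmono.tendsto_atTop))
  have hc0 : ‖c‖ ^ p / p + ‖b‖ ^ p / q - ‖b‖ ^ (p - 2) * ⟪c, b⟫ = 0 :=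
    tendsto_nhds_unique hψc hψ0
  have hcb : c = b := eq_of_gap_eq_zero hpq hb hc0
  exact ⟨φ, by rw [← hcb]; exact hφ⟩

private lemma two_point_jensen {p x y : ℝ} (hp : 1 ≤ p) (hx : 0 ≤ x) (hy : 0 ≤ y) :
    (x + y) ^ p ≤ 2 ^ (p - 1) * (x ^ p + y ^ p) := by
  have hc := (convexOn_rpow hp).2 (Set.mem_Ici.2 hx) (Set.mem_Ici.2 hy)
    (by norm_num : (0:ℝ) ≤ (1/2 : ℝ)) (by norm_num : (0:ℝ) ≤ (1/2 : ℝ)) (by norm_num)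
  simp only [smul_eq_mul] at hc
  have hkey : (x + y) ^ p = 2 ^ p * ((1:ℝ)/2 * x + 1/2 * y) ^ p := by
    rw [← Real.mul_rpow (by norm_num) (by positivity)]
    congr 1
    ring
  have h2 : (2:ℝ) ^ p = 2 ^ (p - 1) * 2 := by
    rw [← Real.rpow_add_one (by norm_num : (2:ℝ) ≠ 0) (p - 1)]
    congr 1; ring
  have h2p : (0:ℝ) < 2 ^ p := Real.rpow_pos_of_pos two_pos _
  calc (x + y) ^ p = 2 ^ p * ((1:ℝ)/2 * x + 1/2 * y) ^ p := hkey
    _ ≤ 2 ^ p * (1/2 * x ^ p + 1/2 * y ^ p) := mul_le_mul_of_nonneg_left hc h2p.le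
    _ = 2 ^ (p - 1) * (x ^ p + y ^ p) := by rw [h2]; ring

private lemma rpow_sub_le {F : Type*} [NormedAddCommGroup F] {p : ℝ} (hp : 1 ≤ p) (a b : F) :
    ‖a - b‖ ^ p ≤ 2 ^ (p - 1) * (‖a‖ ^ p + ‖b‖ ^ p) := by
  have h1 : ‖a - b‖ ^ p ≤ (‖a‖ + ‖b‖) ^ p :=
    Real.rpow_le_rpow (norm_nonneg _) (norm_sub_le a b) (by linarith)
  exact h1.trans (two_point_jensen hp (norm_nonneg a) (norm_nonneg b))

end AuxLemmas

open RealInnerProductSpace in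
/-- If `∫|u_n|^{p*} = 1`, `∫|∇u_n|^p → S_{d,p}`, `∇u_n ⇀ ∇u₀` weakly in `L^p` and
`u_n → u₀` strongly in `L^{p*}`, then `u₀` is an optimizer (with `∫|u₀|^{p*} = 1`)
and `∇u_n → ∇u₀` strongly in `L^p`. -/
theorem weak_limit_is_optimizer (d : ℕ) (p : ℝ) (hd : 2 ≤ d) (hp1 : 1 < p) (hpd : p < d)
    (u : ℕ → Rd d → ℝ) (g : ℕ → Rd d → Rd d) (u₀ : Rd d → ℝ) (g₀ : Rd d → Rd d)
    (hW : ∀ n, MemW1p d p (u n) (g n)) (hW0 : MemW1p d p u₀ g₀)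
    (hnorm : ∀ n, (∫ x, |u n x| ^ pStar d p) = 1)
    (hmin : Tendsto (fun n => ∫ x, ‖g n x‖ ^ p) atTop (nhds (SobolevS d p)))
    (hweak : ∀ h : Rd d → Rd d, MemLp h (ENNReal.ofReal (p / (p - 1))) volume →
      Tendsto (fun n => ∫ x, ⟪g n x, h x⟫) atTop (nhds (∫ x, ⟪g₀ x, h x⟫)))
    (hstrong : Tendsto (fun n => ∫ x, |u n x - u₀ x| ^ pStar d p) atTop (nhds 0)) :
    (∫ x, |u₀ x| ^ pStar d p) = 1 ∧
    (∫ x, ‖g₀ x‖ ^ p) = SobolevS d p * (∫ x, |u₀ x| ^ pStar d p) ^ (p / pStar d p) ∧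
    Tendsto (fun n => ∫ x, ‖g n x - g₀ x‖ ^ p) atTop (nhds 0) := by
  classical
  have hp0 : (0:ℝ) < p := lt_trans zero_lt_one hp1
  have hp1' : p - 1 ≠ 0 := by linarith
  set q' : ℝ := p / (p - 1) with hq'def
  have hpq : p.HolderConjugate q' := Real.holderConjugate_iff.2 ⟨hp1, by rw [hq'def]; field_simp; ring⟩
  have hdR : (2:ℝ) ≤ (d:ℝ) := by exact_mod_cast hd
  have hs1 : 1 < pStar d p := by
    rw [pStar, lt_div_iff₀ (by linarith : (0:ℝ) < (d:ℝ) - p)]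
    nlinarith
  set s : ℝ := pStar d p with hsdef
  have hs0 : (0:ℝ) < s := lt_trans zero_lt_one hs1
  set P : ENNReal := ENNReal.ofReal p with hPdef
  set Q : ENNReal := ENNReal.ofReal s with hQdef
  have hP0 : P ≠ 0 := by
    rw [hPdef, Ne, ENNReal.ofReal_eq_zero]; push_neg; exact hp0
  have hPt : P ≠ ⊤ := ENNReal.ofReal_ne_top
  have hPr : P.toReal = p := ENNReal.toReal_ofReal hp0.le
  have hQ0 : Q ≠ 0 := by
    rw [hQdef, Ne, ENNReal.ofReal_eq_zero]; push_neg; exact hs0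
  have hQt : Q ≠ ⊤ := ENNReal.ofReal_ne_top
  have hQr : Q.toReal = s := ENNReal.toReal_ofReal hs0.le
  have hQ1 : 1 ≤ Q := by
    rw [hQdef, ← ENNReal.ofReal_one]; exact ENNReal.ofReal_le_ofReal hs1.le
  -- Step A : ∫ |u₀|^s = 1
  have hel : ∀ f : Rd d → ℝ, MemLp f Q volume →
      eLpNorm f Q volume = ENNReal.ofReal ((∫ x, |f x| ^ s) ^ s⁻¹) := by
    intro f hf
    rw [hf.eLpNorm_eq_integral_rpow_norm hQ0 hQt]
    simp_rw [Real.norm_eq_abs, hQr]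
  set β : ℝ := ∫ x, |u₀ x| ^ s with hβdef
  have hβ0 : 0 ≤ β := integral_nonneg fun x => Real.rpow_nonneg (abs_nonneg _) _
  have hγnn : ∀ n, 0 ≤ (∫ x, |u n x - u₀ x| ^ s) ^ s⁻¹ := fun n =>
    Real.rpow_nonneg (integral_nonneg fun x => Real.rpow_nonneg (abs_nonneg _) _) _
  have hγ : Tendsto (fun n => (∫ x, |u n x - u₀ x| ^ s) ^ s⁻¹) atTop (nhds 0) := by
    have hc : ContinuousAt (fun y : ℝ => y ^ s⁻¹) 0 :=
      Real.continuousAt_rpow_const 0 s⁻¹ (Or.inr (by positivity))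
    have := hc.tendsto.comp hstrong
    simpa [Function.comp_def, Real.zero_rpow (inv_pos.2 hs0).ne'] using this
  have hstepA : β = 1 := by
    have hint_nn : ∀ n, (0:ℝ) ≤ ∫ x, |u n x - u₀ x| ^ s :=
      fun n => integral_nonneg fun x => Real.rpow_nonneg (abs_nonneg _) _
    have key : β ^ s⁻¹ = 1 := by
      have h1 : ∀ n, (1:ℝ) ≤ β ^ s⁻¹ + (∫ x, |u n x - u₀ x| ^ s) ^ s⁻¹ := by
        intro n
        have hm : MemLp (fun x => u n x - u₀ x) Q volume := (hW n).1.sub hW0.1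
        have ht := eLpNorm_add_le hW0.1.1 hm.1 hQ1
        have he : (u₀ + fun x => u n x - u₀ x) = u n := by
          funext x; simp
        rw [he, hel (u n) (hW n).1, hel u₀ hW0.1, hel _ hm] at ht
        rw [hnorm n, Real.one_rpow] at ht
        rw [← ENNReal.ofReal_add (Real.rpow_nonneg hβ0 _) (hγnn n)] at ht
        exact (ENNReal.ofReal_le_ofReal_iff (add_nonneg (Real.rpow_nonneg hβ0 _) (hγnn n))).1 ht
      have h2 : ∀ n, β ^ s⁻¹ ≤ 1 + (∫ x, |u n x - u₀ x| ^ s) ^ s⁻¹ := by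
        intro n
        have hm : MemLp (fun x => u₀ x - u n x) Q volume := hW0.1.sub (hW n).1
        have ht := eLpNorm_add_le (hW n).1.1 hm.1 hQ1
        have he : ((u n) + fun x => u₀ x - u n x) = u₀ := by
          funext x; simp
        rw [he, hel u₀ hW0.1, hel (u n) (hW n).1, hel _ hm] at ht
        have habs : (∫ x, |u₀ x - u n x| ^ s) = ∫ x, |u n x - u₀ x| ^ s := by
          congr 1; funext x; rw [abs_sub_comm]
        rw [habs, hnorm n, Real.one_rpow] at ht
        rw [← ENNReal.ofReal_add zero_le_one (hγnn n)] at ht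
        exact (ENNReal.ofReal_le_ofReal_iff (add_nonneg zero_le_one (hγnn n))).1 ht
      have t1 : Tendsto (fun n => β ^ s⁻¹ + (∫ x, |u n x - u₀ x| ^ s) ^ s⁻¹) atTop
          (nhds (β ^ s⁻¹)) := by
        have := (tendsto_const_nhds (x := β ^ s⁻¹) (f := atTop (α := ℕ))).add hγ
        simpa using this
      have t2 : Tendsto (fun n => (1:ℝ) + (∫ x, |u n x - u₀ x| ^ s) ^ s⁻¹) atTop (nhds 1) := by
        have := (tendsto_const_nhds (x := (1:ℝ)) (f := atTop (α := ℕ))).add hγ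
        simpa using this
      have hge : (1:ℝ) ≤ β ^ s⁻¹ := ge_of_tendsto' t1 h1
      have hle : β ^ s⁻¹ ≤ 1 := ge_of_tendsto' t2 h2
      linarith
    calc β = (β ^ s⁻¹) ^ s := by
          rw [← Real.rpow_mul hβ0, inv_mul_cancel₀ hs0.ne', Real.rpow_one]
      _ = 1 := by rw [key, Real.one_rpow]
  -- basic nonnegativity of the Sobolev set
  have hset : ∀ r ∈ {r : ℝ | ∃ v w, MemW1p d p v w ∧ ¬ (v =ᵐ[volume] (fun _ => (0:ℝ))) ∧
      r = (∫ x, ‖w x‖ ^ p) / (∫ x, |v x| ^ pStar d p) ^ (p / pStar d p)}, 0 ≤ r := by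
    rintro r ⟨v, w, _, _, rfl⟩
    exact div_nonneg (integral_nonneg fun x => Real.rpow_nonneg (norm_nonneg _) _)
      (Real.rpow_nonneg (integral_nonneg fun x => Real.rpow_nonneg (abs_nonneg _) _) _)
  have hS0 : 0 ≤ SobolevS d p := by
    rw [SobolevS]
    exact Real.sInf_nonneg hset
  set I₀ : ℝ := ∫ x, ‖g₀ x‖ ^ p with hI₀def
  have hI₀0 : 0 ≤ I₀ := integral_nonneg fun x => Real.rpow_nonneg (norm_nonneg _) _
  have hu0ne : ¬ (u₀ =ᵐ[volume] (fun _ => (0:ℝ))) := by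
    intro hcon
    have hz : (fun x => |u₀ x| ^ s) =ᵐ[volume] (fun _ => (0:ℝ)) :=
      hcon.mono fun x hx => by simp [hx, Real.zero_rpow hs0.ne']
    have : β = 0 := by
      rw [hβdef, integral_congr_ae hz, integral_zero]
    rw [hstepA] at this
    norm_num at this
  have hSle : SobolevS d p ≤ I₀ := by
    rw [SobolevS]
    refine csInf_le ⟨0, fun r hr => hset r hr⟩ ?_
    refine ⟨u₀, g₀, hW0, hu0ne, ?_⟩
    rw [← hsdef, ← hβdef, hstepA, Real.one_rpow, div_one]
  -- the dual function h⋆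
  set hst : Rd d → Rd d := fun x => ‖g₀ x‖ ^ (p - 2) • g₀ x with hstdef
  have hg₀m : AEStronglyMeasurable g₀ volume := hW0.2.1.1
  have hstm : AEStronglyMeasurable hst volume :=
    ((hg₀m.norm.aemeasurable.pow_const (p - 2)).aestronglyMeasurable).smul hg₀m
  have hstnorm : ∀ x, ‖hst x‖ = ‖g₀ x‖ ^ (p - 1) := by
    intro x
    rcases eq_or_ne (g₀ x) 0 with h0 | h0
    · rw [hstdef]
      simp only [h0, smul_zero, norm_zero]
      rw [Real.zero_rpow hp1']
    · have hB : 0 < ‖g₀ x‖ := norm_pos_iff.2 h0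
      rw [hstdef]
      simp only
      rw [norm_smul, Real.norm_eq_abs, abs_of_nonneg (Real.rpow_nonneg hB.le _), rpow_step hB]
  have hstmem : MemLp hst (ENNReal.ofReal q') volume := by
    have h2 := hW0.2.1.norm_rpow_div (ENNReal.ofReal (p - 1))
    have e1 : (ENNReal.ofReal (p - 1)).toReal = p - 1 := ENNReal.toReal_ofReal (by linarith)
    have e2 : P / ENNReal.ofReal (p - 1) = ENNReal.ofReal q' := by
      rw [hPdef, hq'def, ENNReal.ofReal_div_of_pos (by linarith)]
    rw [e1, e2] at h2
    refine h2.of_le hstm (Eventually.of_forall fun x => ?_)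
    rw [hstnorm x, Real.norm_eq_abs, abs_of_nonneg (Real.rpow_nonneg (norm_nonneg _) _)]
  have hg₀inner : ∀ x, ⟪g₀ x, hst x⟫ = ‖g₀ x‖ ^ p := by
    intro x
    rcases eq_or_ne (g₀ x) 0 with h0 | h0
    · simp [hstdef, h0, Real.zero_rpow hp0.ne']
    · have hB : 0 < ‖g₀ x‖ := norm_pos_iff.2 h0
      rw [hstdef]
      simp only
      rw [real_inner_smul_right, real_inner_self_eq_norm_mul_norm]
      have hstep2 : ‖g₀ x‖ ^ (p - 1) * ‖g₀ x‖ = ‖g₀ x‖ ^ p := by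
        rw [← Real.rpow_add_one (ne_of_gt hB) (p - 1)]
        congr 1; ring
      rw [← mul_assoc, rpow_step hB, hstep2]
  have hstint : (∫ x, ‖hst x‖ ^ q') = I₀ := by
    rw [hI₀def]
    refine integral_congr_ae (Eventually.of_forall fun x => ?_)
    show ‖hst x‖ ^ q' = ‖g₀ x‖ ^ p
    rw [hstnorm x, ← Real.rpow_mul (norm_nonneg _), hpq.sub_one_mul_conj]
  -- integrability facts
  have hintg : ∀ n, Integrable (fun x => ‖g n x‖ ^ p) volume := fun n => by
    have := (hW n).2.1.integrable_norm_rpow hP0 hPt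
    rwa [hPr] at this
  have hintg₀ : Integrable (fun x => ‖g₀ x‖ ^ p) volume := by
    have := hW0.2.1.integrable_norm_rpow hP0 hPt
    rwa [hPr] at this
  have hprod_int : ∀ n, Integrable (fun x => ‖g n x‖ * ‖hst x‖) volume := by
    intro n
    have h1 : MemLp (fun x => ‖hst x‖) (ENNReal.ofReal q') volume := hstmem.norm
    have h2 : MemLp (fun x => ‖g n x‖) P volume := (hW n).2.1.norm
    have h3 : MemLp ((fun x => ‖g n x‖) • (fun x => ‖hst x‖)) 1 volume := by
      have hT : ENNReal.HolderTriple P (ENNReal.ofReal q') 1 :=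
        ⟨by rw [hPdef, inv_one]; exact hpq.inv_add_inv_ennreal⟩
      exact h1.smul h2
    have h4 := memLp_one_iff_integrable.1 h3
    exact h4.congr (Eventually.of_forall fun x => by simp [smul_eq_mul])
  have hinner_int : ∀ n, Integrable (fun x => ⟪g n x, hst x⟫) volume := fun n =>
    (hprod_int n).mono' ((hW n).2.1.1.inner hstm)
      (Eventually.of_forall fun x => by
        rw [Real.norm_eq_abs]; exact abs_real_inner_le_norm _ _)
  have htendI : Tendsto (fun n => ∫ x, ⟪g n x, hst x⟫) atTop (nhds I₀) := by
    have h1 := hweak hst hstmem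
    have h2 : (∫ x, ⟪g₀ x, hst x⟫) = I₀ := by
      rw [hI₀def]
      exact integral_congr_ae (Eventually.of_forall fun x => hg₀inner x)
    rwa [h2] at h1
  have hHold : ∀ n, (∫ x, ⟪g n x, hst x⟫) ≤ (∫ x, ‖g n x‖ ^ p) ^ (1/p) * I₀ ^ (1/q') := by
    intro n
    have h1 : (∫ x, ⟪g n x, hst x⟫) ≤ ∫ x, ‖g n x‖ * ‖hst x‖ :=
      integral_mono (hinner_int n) (hprod_int n) fun x => real_inner_le_norm _ _
    have h2 := integral_mul_norm_le_Lp_mul_Lq hpq (hW n).2.1 hstmem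
    rw [hstint] at h2
    linarith
  have hIle : I₀ ≤ SobolevS d p ^ (1/p) * I₀ ^ (1/q') := by
    refine le_of_tendsto_of_tendsto' htendI ?_ hHold
    have hc : ContinuousAt (fun y : ℝ => y ^ (1/p)) (SobolevS d p) :=
      Real.continuousAt_rpow_const _ _ (Or.inr (by positivity))
    exact (hc.tendsto.comp hmin).mul_const _
  have hIleS : I₀ ≤ SobolevS d p := by
    rcases eq_or_lt_of_le hI₀0 with h0 | hpos
    · rw [← h0]; exact hS0
    · by_contra hcon
      push_neg at hcon
      have h1 : I₀ ^ (1/p) * I₀ ^ (1/q') ≤ SobolevS d p ^ (1/p) * I₀ ^ (1/q') := by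
        calc I₀ ^ (1/p) * I₀ ^ (1/q') = I₀ ^ (1/p + 1/q') := (Real.rpow_add hpos _ _).symm
          _ = I₀ := by
              rw [show 1/p + 1/q' = 1 by
                rw [one_div, one_div]; exact hpq.inv_add_inv_eq_one, Real.rpow_one]
          _ ≤ _ := hIle
      have h2 : I₀ ^ (1/p) ≤ SobolevS d p ^ (1/p) :=
        le_of_mul_le_mul_right h1 (Real.rpow_pos_of_pos hpos _)
      have h3 : SobolevS d p ^ (1/p) < I₀ ^ (1/p) :=
        Real.rpow_lt_rpow hS0 hcon (by positivity)
      linarith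
  have hIS : I₀ = SobolevS d p := le_antisymm hIleS hSle
  refine ⟨hstepA, ?_, ?_⟩
  · rw [hstepA, Real.one_rpow, mul_one]
    exact hIS
  · -- Step C : strong convergence of gradients
    rcases eq_or_lt_of_le hS0 with hSzero | hSpos
    · -- degenerate case S = 0
      have hI0 : I₀ = 0 := by rw [hIS, ← hSzero]
      have hg0ae : ∀ᵐ x ∂(volume : Measure (Rd d)), g₀ x = 0 := by
        have h1 := (integral_eq_zero_iff_of_nonneg
          (fun x => Real.rpow_nonneg (norm_nonneg _) _) hintg₀).1 hI0
        filter_upwards [h1] with x hx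
        have hx' : ‖g₀ x‖ ^ p = 0 := hx
        have h2 : ‖g₀ x‖ = 0 := ((Real.rpow_eq_zero (norm_nonneg _) hp0.ne').1 hx')
        exact norm_eq_zero.1 h2
      have hcongr : ∀ n, (∫ x, ‖g n x - g₀ x‖ ^ p) = ∫ x, ‖g n x‖ ^ p := fun n =>
        integral_congr_ae (hg0ae.mono fun x hx => by
          show ‖g n x - g₀ x‖ ^ p = ‖g n x‖ ^ p
          rw [hx, sub_zero])
      have hmin' := hmin
      rw [← hSzero] at hmin'
      exact hmin'.congr fun n => (hcongr n).symm
    · -- main case 0 < S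
      set ψ : ℕ → Rd d → ℝ :=
        fun n x => ‖g n x‖ ^ p / p + ‖g₀ x‖ ^ p / q' - ⟪g n x, hst x⟫ with hψdef
      have hψnn : ∀ n x, 0 ≤ ψ n x := by
        intro n x
        have h1 := gap_nonneg hpq (g n x) (g₀ x)
        have h2 : ⟪g n x, hst x⟫ = ‖g₀ x‖ ^ (p - 2) * ⟪g n x, g₀ x⟫ := by
          rw [hstdef]; exact real_inner_smul_right _ _ _
        simp only [hψdef]
        linarith
      have hψint : ∀ n, Integrable (ψ n) volume := fun n =>
        (((hintg n).div_const p).add (hintg₀.div_const q')).sub (hinner_int n)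
      have hψeq : ∀ n, ∫ x, ψ n x
          = (∫ x, ‖g n x‖ ^ p) / p + I₀ / q' - ∫ x, ⟪g n x, hst x⟫ := by
        intro n
        have hint1 : Integrable (fun x => ‖g n x‖ ^ p / p + ‖g₀ x‖ ^ p / q') volume :=
          ((hintg n).div_const p).add (hintg₀.div_const q')
        rw [hψdef]
        rw [integral_sub hint1 (hinner_int n),
          integral_add ((hintg n).div_const p) (hintg₀.div_const q'),
          integral_div, integral_div]
      have hψtend : Tendsto (fun n => ∫ x, ψ n x) atTop (nhds 0) := by
        have h1 : Tendsto (fun n => (∫ x, ‖g n x‖ ^ p) / p + I₀ / q' - ∫ x, ⟪g n x, hst x⟫)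
            atTop (nhds (SobolevS d p / p + I₀ / q' - I₀)) :=
          ((hmin.div_const p).add tendsto_const_nhds).sub htendI
        have h2 : SobolevS d p / p + I₀ / q' - I₀ = 0 := by
          rw [hIS, div_eq_mul_inv, div_eq_mul_inv]
          have h3 := hpq.inv_add_inv_eq_one
          linear_combination (SobolevS d p) * h3
        rw [h2] at h1
        exact h1.congr fun n => (hψeq n).symm
      apply tendsto_of_subseq_tendsto
      intro ns hns
      have hTIM : TendstoInMeasure volume (fun k => ψ (ns k)) atTop (fun _ => (0:ℝ)) := by
        apply tendstoInMeasure_of_tendsto_eLpNorm (p := 1) one_ne_zero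
          (fun k => (hψint (ns k)).aestronglyMeasurable) aestronglyMeasurable_const
        have heq : ∀ j : ℕ, eLpNorm (ψ j - fun _ => (0:ℝ)) 1 volume
            = ENNReal.ofReal (∫ x, ψ j x) := by
          intro j
          have he : ψ j - (fun _ => (0:ℝ)) = ψ j := by funext x; simp
          rw [he, eLpNorm_one_eq_lintegral_enorm,
            ofReal_integral_eq_lintegral_ofReal (hψint j) (Eventually.of_forall (hψnn j))]
          refine lintegral_congr fun x => ?_
          rw [Real.enorm_eq_ofReal (hψnn j x)]
        have h1 : Tendsto (fun k => ENNReal.ofReal (∫ x, ψ (ns k) x)) atTop (nhds 0) := by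
          rw [← ENNReal.ofReal_zero]
          exact ENNReal.tendsto_ofReal (hψtend.comp hns)
        exact Tendsto.congr (fun k => (heq (ns k)).symm) h1
      obtain ⟨ms, hmsmono, hae⟩ := hTIM.exists_seq_tendsto_ae
      set m : ℕ → ℕ := fun i => ns (ms i) with hmdef
      set c2 : ℝ := (2:ℝ) ^ (p - 1) with hc2def
      have hc2pos : 0 < c2 := Real.rpow_pos_of_pos two_pos _
      have hc22 : c2 * 2 = 2 ^ p := by
        rw [hc2def, ← Real.rpow_add_one (by norm_num : (2:ℝ) ≠ 0) (p - 1)]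
        congr 1; ring
      set h : ℕ → Rd d → ℝ :=
        fun k x => c2 * (‖g (m k) x‖ ^ p + ‖g₀ x‖ ^ p) - ‖g (m k) x - g₀ x‖ ^ p with hhdef
      have hFint : ∀ n, Integrable (fun x => ‖g n x - g₀ x‖ ^ p) volume := fun n => by
        have := ((hW n).2.1.sub hW0.2.1).integrable_norm_rpow hP0 hPt
        rwa [hPr] at this
      have hhint : ∀ k, Integrable (h k) volume := fun k =>
        ((((hintg (m k)).add hintg₀).const_mul c2)).sub (hFint (m k))
      have hhnn : ∀ k x, 0 ≤ h k x := by
        intro k x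
        have := rpow_sub_le hp1.le (g (m k) x) (g₀ x)
        simp only [hhdef, hc2def]
        linarith
      have hheq : ∀ k, ∫ x, h k x
          = c2 * ((∫ x, ‖g (m k) x‖ ^ p) + I₀) - ∫ x, ‖g (m k) x - g₀ x‖ ^ p := by
        intro k
        have hint3 : Integrable (fun x => c2 * (‖g (m k) x‖ ^ p + ‖g₀ x‖ ^ p)) volume :=
          ((hintg (m k)).add hintg₀).const_mul c2
        have hint4 : Integrable (fun x => ‖g (m k) x‖ ^ p + ‖g₀ x‖ ^ p) volume :=
          (hintg (m k)).add hintg₀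
        rw [hhdef]
        rw [integral_sub hint3 (hFint (m k)), integral_const_mul, integral_add (hintg (m k)) hintg₀]
      have hptw : ∀ᵐ x ∂(volume : Measure (Rd d)),
          ENNReal.ofReal (2 ^ p * ‖g₀ x‖ ^ p)
            ≤ atTop.liminf fun k => ENNReal.ofReal (h k x) := by
        filter_upwards [hae] with x hx
        rcases eq_or_ne (g₀ x) 0 with h0 | h0
        · simp [h0, Real.zero_rpow hp0.ne']
        · have hgap : Tendsto
              (fun k => ‖g (m k) x‖ ^ p / p + ‖g₀ x‖ ^ p / q'
                - ‖g₀ x‖ ^ (p - 2) * ⟪g (m k) x, g₀ x⟫) atTop (nhds 0) := by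
            refine Tendsto.congr (fun k => ?_) hx
            simp only [hψdef, hstdef]
            rw [real_inner_smul_right]
          have hb : Tendsto (fun k => g (m k) x) atTop (nhds (g₀ x)) :=
            tendsto_of_gap_tendsto_zero hpq h0 hgap
          have hnorm1 : Tendsto (fun k => ‖g (m k) x‖ ^ p) atTop (nhds (‖g₀ x‖ ^ p)) := by
            have hcont : ContinuousAt (fun y : ℝ => y ^ p) ‖g₀ x‖ :=
              Real.continuousAt_rpow_const _ _ (Or.inr hp0.le)
            exact (hcont.tendsto).comp ((continuous_norm.tendsto _).comp hb)
          have hnorm2 : Tendsto (fun k => ‖g (m k) x - g₀ x‖ ^ p) atTop (nhds 0) := by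
            have h3 : Tendsto (fun k => g (m k) x - g₀ x) atTop (nhds 0) := by
              have := hb.sub (tendsto_const_nhds (x := g₀ x) (f := atTop (α := ℕ)))
              simpa using this
            have h4 : Tendsto (fun k => ‖g (m k) x - g₀ x‖) atTop (nhds 0) := by
              have := (continuous_norm.tendsto (0 : Rd d)).comp h3
              simpa [Function.comp_def] using this
            have hcont0 : ContinuousAt (fun y : ℝ => y ^ p) 0 :=
              Real.continuousAt_rpow_const _ _ (Or.inr hp0.le)
            have := hcont0.tendsto.comp h4
            simpa [Function.comp_def, Real.zero_rpow hp0.ne'] using this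
          have hh : Tendsto (fun k => h k x) atTop (nhds (2 ^ p * ‖g₀ x‖ ^ p)) := by
            have h5 := ((hnorm1.add (tendsto_const_nhds (x := ‖g₀ x‖ ^ p)
              (f := atTop (α := ℕ)))).const_mul c2).sub hnorm2
            have harith : c2 * (‖g₀ x‖ ^ p + ‖g₀ x‖ ^ p) - 0 = 2 ^ p * ‖g₀ x‖ ^ p := by
              rw [← hc22]; ring
            rw [harith] at h5
            exact h5
          rw [(ENNReal.tendsto_ofReal hh).liminf_eq]
      have hfatou : ENNReal.ofReal (2 ^ p * SobolevS d p)
          ≤ atTop.liminf fun k => ENNReal.ofReal (∫ x, h k x) := by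
        have hint2 : Integrable (fun x => 2 ^ p * ‖g₀ x‖ ^ p) volume := hintg₀.const_mul _
        have step1 : ENNReal.ofReal (2 ^ p * SobolevS d p)
            = ∫⁻ x, ENNReal.ofReal (2 ^ p * ‖g₀ x‖ ^ p) ∂volume := by
          rw [← ofReal_integral_eq_lintegral_ofReal hint2
            (Eventually.of_forall fun x => by positivity)]
          congr 1
          rw [integral_const_mul, ← hIS]
        rw [step1]
        calc ∫⁻ x, ENNReal.ofReal (2 ^ p * ‖g₀ x‖ ^ p) ∂volume
            ≤ ∫⁻ x, atTop.liminf (fun k => ENNReal.ofReal (h k x)) ∂volume :=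
              lintegral_mono_ae hptw
          _ ≤ atTop.liminf fun k => ∫⁻ x, ENNReal.ofReal (h k x) ∂volume :=
              lintegral_liminf_le' fun k => ((hhint k).aemeasurable).ennreal_ofReal
          _ = atTop.liminf fun k => ENNReal.ofReal (∫ x, h k x) := by
              congr 1
              funext k
              rw [← ofReal_integral_eq_lintegral_ofReal (hhint k)
                (Eventually.of_forall (hhnn k))]
      have hlow : ∀ ε : ℝ, 0 < ε → ∀ᶠ k in atTop, 2 ^ p * SobolevS d p - ε < ∫ x, h k x := by
        intro ε hε
        rcases lt_or_ge (2 ^ p * SobolevS d p - ε) 0 with hneg | hnn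
        · exact Eventually.of_forall fun k => lt_of_lt_of_le hneg (integral_nonneg (hhnn k))
        · have h2pS : 0 < 2 ^ p * SobolevS d p :=
            mul_pos (Real.rpow_pos_of_pos two_pos p) hSpos
          have h1 : ENNReal.ofReal (2 ^ p * SobolevS d p - ε)
              < ENNReal.ofReal (2 ^ p * SobolevS d p) :=
            (ENNReal.ofReal_lt_ofReal_iff h2pS).2 (by linarith)
          have h2 := lt_of_lt_of_le h1 hfatou
          have h3 := eventually_lt_of_lt_liminf h2
          filter_upwards [h3] with k hk
          exact (ENNReal.ofReal_lt_ofReal_iff_of_nonneg hnn).1 hk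
      refine ⟨ms, ?_⟩
      have hAm : Tendsto (fun k => ∫ x, ‖g (m k) x‖ ^ p) atTop (nhds (SobolevS d p)) :=
        hmin.comp (hns.comp hmsmono.tendsto_atTop)
      have hFnn : ∀ k, 0 ≤ ∫ x, ‖g (m k) x - g₀ x‖ ^ p := fun k =>
        integral_nonneg fun x => Real.rpow_nonneg (norm_nonneg _) _
      refine tendsto_order.2 ⟨fun a ha => ?_, fun a ha => ?_⟩
      · exact Eventually.of_forall fun k => lt_of_lt_of_le ha (hFnn k)
      · have hδ : 0 < a / (2 * c2) := div_pos ha (by positivity)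
        have e1 := hAm.eventually_lt_const
          (show SobolevS d p < SobolevS d p + a / (2 * c2) by linarith)
        have e2 := hlow (a / 2) (by linarith)
        filter_upwards [e1, e2] with k hk1 hk2
        have hF := hheq k
        show (∫ x, ‖g (m k) x - g₀ x‖ ^ p) < a
        have hexp : (∫ x, ‖g (m k) x - g₀ x‖ ^ p)
            = c2 * ((∫ x, ‖g (m k) x‖ ^ p) + I₀) - ∫ x, h k x := by linarith
        rw [hexp, hIS]
        have hcalc : c2 * (SobolevS d p + SobolevS d p) = 2 ^ p * SobolevS d p := by
          rw [← hc22]; ring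
        have hm1 : c2 * ((∫ x, ‖g (m k) x‖ ^ p) + SobolevS d p)
            < c2 * (SobolevS d p + a / (2 * c2) + SobolevS d p) :=
          mul_lt_mul_of_pos_left (by linarith) hc2pos
        have hc2ne : c2 ≠ 0 := hc2pos.ne'
        have hcancel : c2 * (a / (2 * c2)) = a / 2 := by
          field_simp
        have hm2 : c2 * (SobolevS d p + a / (2 * c2) + SobolevS d p)
            = 2 ^ p * SobolevS d p + a / 2 := by
          linear_combination hcalc + hcancel
        linarith
end
end
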